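/- arXiv:2003.02954 — 5 statements merged into one kernel-verified Lean document; each statement's English description precedes it below -/
import Mathlib

section
/- Assume μ1 = μ2 = μ > 0 and −1 < ρ < 0. Then inf_{(t,s)∈(0,∞)²} g(t,s) = 8(1−ρ)·μ, and this infimum is attained exactly at the two points ((1−2ρ)/μ, 1/((1−2ρ)·μ)) and (1/((1−2ρ)·μ), (1−2ρ)/μ), and at no other point of (0,∞)². -/
open Matrix

/-- Covariance matrix `Σ_{ts}` of `(X₁(t), X₂(s))` for a correlated Brownian motion with
correlation `ρ`. -/
noncomputable def covM (ρ t s : ℝ) : Matrix (Fin 2) (Fin 2) ℝ :=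
  !![t, ρ * min t s; ρ * min t s, s]

/-- `g(t,s) = inf { (x,y) Σ_{ts}⁻¹ (x,y)ᵀ : x ≥ 1 + μ₁ t, y ≥ 1 + μ₂ s }`. -/
noncomputable def gfun (ρ μ1 μ2 t s : ℝ) : ℝ :=
  sInf {v : ℝ | ∃ x y : ℝ, 1 + μ1 * t ≤ x ∧ 1 + μ2 * s ≤ y ∧
    v = ![x, y] ⬝ᵥ ((covM ρ t s)⁻¹ *ᵥ ![x, y])}

/-!
Conditioning on the second coordinate (a Schur complement) writes the quadratic form, for
`s ≤ t`, as `y² / s + (x - ρ y)² / (t - ρ² s)`. For `ρ ≤ 0` both terms increase in `x` and `y`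
on the feasible region, so the infimum defining `g` is attained at its corner. At the corner,
`g(t, s) - 8 (1 - ρ) μ` is a sum of two squares over `s` and `t - ρ² s`, which vanish exactly when
`(1 - 2ρ) μ s = 1` and `μ t = 1 - 2ρ`. The case `t ≤ s` follows by swapping the coordinates.
-/

theorem covM_swap (ρ t s : ℝ) :
    covM ρ s t = (covM ρ t s).submatrix (Equiv.swap 0 1) (Equiv.swap 0 1) := by
  ext i j
  fin_cases i <;> fin_cases j <;> simp [covM, min_comm]

theorem quadForm_covM_swap (ρ t s x y : ℝ) :
    ![y, x] ⬝ᵥ ((covM ρ s t)⁻¹ *ᵥ ![y, x]) = ![x, y] ⬝ᵥ ((covM ρ t s)⁻¹ *ᵥ ![x, y]) := by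
  have hswap : ![y, x] = ![x, y] ∘ Equiv.swap (0 : Fin 2) 1 := by
    ext i; fin_cases i <;> rfl
  rw [covM_swap, inv_submatrix_equiv, hswap, submatrix_mulVec_equiv, Function.comp_assoc,
    Equiv.self_comp_symm, Function.comp_id, comp_equiv_dotProduct_comp_equiv]

theorem gfun_comm (ρ μ₁ μ₂ t s : ℝ) : gfun ρ μ₁ μ₂ t s = gfun ρ μ₂ μ₁ s t := by
  unfold gfun
  congr 1
  ext v
  constructor
  · rintro ⟨x, y, hx, hy, rfl⟩
    exact ⟨y, x, hy, hx, (quadForm_covM_swap ρ t s x y).symm⟩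
  · rintro ⟨y, x, hy, hx, rfl⟩
    exact ⟨x, y, hx, hy, quadForm_covM_swap ρ t s x y⟩

theorem schur_complement_pos {ρ t s : ℝ} (hρ : ρ ^ 2 < 1) (hs : 0 < s) (hst : s ≤ t) :
    0 < t - ρ ^ 2 * s := by
  nlinarith [mul_pos hs (sub_pos.2 hρ)]

theorem quadForm_covM_of_le {ρ t s : ℝ} (hρ : ρ ^ 2 < 1) (hs : 0 < s) (hst : s ≤ t) (x y : ℝ) :
    ![x, y] ⬝ᵥ ((covM ρ t s)⁻¹ *ᵥ ![x, y]) = y ^ 2 / s + (x - ρ * y) ^ 2 / (t - ρ ^ 2 * s) := by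
  have hu := schur_complement_pos hρ hs hst
  have hdet : (covM ρ t s).det = s * (t - ρ ^ 2 * s) := by
    rw [covM, min_eq_right hst, det_fin_two_of]
    ring
  rw [inv_def, hdet, Ring.inverse_eq_inv', covM, min_eq_right hst, adjugate_fin_two_of]
  simp only [smul_mulVec, dotProduct_smul, smul_eq_mul, mulVec_fin_two, vec2_dotProduct', of_apply,
    cons_val_zero, cons_val_one, cons_val_fin_one]
  rw [inv_mul_eq_div, div_add_div _ _ hs.ne' hu.ne', div_eq_div_iff (by positivity) (by positivity)]
  ring

theorem gfun_eq_of_le {ρ μ₁ μ₂ t s : ℝ} (hρ : ρ ^ 2 < 1) (hρu : ρ ≤ 0) (hs : 0 < s)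
    (hst : s ≤ t) (ha : 0 ≤ 1 + μ₁ * t) (hb : 0 ≤ 1 + μ₂ * s) :
    gfun ρ μ₁ μ₂ t s =
      (1 + μ₂ * s) ^ 2 / s + (1 + μ₁ * t - ρ * (1 + μ₂ * s)) ^ 2 / (t - ρ ^ 2 * s) := by
  have hu := schur_complement_pos hρ hs hst
  refine IsLeast.csInf_eq ⟨⟨_, _, le_rfl, le_rfl, (quadForm_covM_of_le hρ hs hst _ _).symm⟩, ?_⟩
  rintro v ⟨x, y, hx, hy, rfl⟩
  rw [quadForm_covM_of_le hρ hs hst]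
  have hρb : 0 ≤ -ρ * (1 + μ₂ * s) := mul_nonneg (neg_nonneg.2 hρu) hb
  have hρy : -ρ * (1 + μ₂ * s) ≤ -ρ * y := mul_le_mul_of_nonneg_left hy (neg_nonneg.2 hρu)
  gcongr ?_ ^ 2 / s + ?_ ^ 2 / _
  · linarith
  · linarith

theorem gfun_sub_eq_of_le {ρ μ t s : ℝ} (hρ : ρ ^ 2 < 1) (hρu : ρ ≤ 0) (hμ : 0 ≤ μ) (hs : 0 < s)
    (hst : s ≤ t) :
    gfun ρ μ μ t s - 8 * (1 - ρ) * μ =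
      ((1 - 2 * ρ) * μ * s - 1) ^ 2 / s +
        ((1 - ρ) * (1 - ρ * μ * s) - μ * (t - ρ ^ 2 * s)) ^ 2 / (t - ρ ^ 2 * s) := by
  have hu := schur_complement_pos hρ hs hst
  have ht : 0 < t := hs.trans_le hst
  rw [gfun_eq_of_le hρ hρu hs hst (by positivity) (by positivity), div_add_div _ _ hs.ne' hu.ne',
    div_add_div _ _ hs.ne' hu.ne', div_sub' (by positivity), div_left_inj' (by positivity)]
  ring

theorem le_gfun_of_le {ρ μ t s : ℝ} (hρ : ρ ^ 2 < 1) (hρu : ρ ≤ 0) (hμ : 0 ≤ μ) (hs : 0 < s)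
    (hst : s ≤ t) : 8 * (1 - ρ) * μ ≤ gfun ρ μ μ t s := by
  have hu := schur_complement_pos hρ hs hst
  exact sub_nonneg.1 (by rw [gfun_sub_eq_of_le hρ hρu hμ hs hst]; positivity)

theorem gfun_eq_iff_of_le {ρ μ t s : ℝ} (hρ : ρ ^ 2 < 1) (hρu : ρ ≤ 0) (hμ : 0 < μ) (hs : 0 < s)
    (hst : s ≤ t) :
    gfun ρ μ μ t s = 8 * (1 - ρ) * μ ↔ t = (1 - 2 * ρ) / μ ∧ s = 1 / ((1 - 2 * ρ) * μ) := by
  have hu := schur_complement_pos hρ hs hst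
  have hc : 0 < 1 - 2 * ρ := by linarith
  rw [← sub_eq_zero, gfun_sub_eq_of_le hρ hρu hμ.le hs hst,
    add_eq_zero_iff_of_nonneg (by positivity) (by positivity), div_eq_zero_iff, div_eq_zero_iff,
    or_iff_left hs.ne', or_iff_left hu.ne', sq_eq_zero_iff, sq_eq_zero_iff,
    eq_div_iff hμ.ne', eq_div_iff (by positivity)]
  constructor
  · rintro ⟨hs₀, ht₀⟩
    exact ⟨by linear_combination -ht₀ - ρ * hs₀, by linear_combination hs₀⟩
  · rintro ⟨ht₀, hs₀⟩
    exact ⟨by linear_combination hs₀, by linear_combination -ht₀ - ρ * hs₀⟩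

/-- If `μ₁ = μ₂ = μ > 0` and `-1 < ρ < 0`, then `inf_{(t,s) ∈ (0,∞)²} g(t,s) = 8(1-ρ)μ`,
attained exactly at the two points `((1-2ρ)/μ, 1/((1-2ρ)μ))` and `(1/((1-2ρ)μ), (1-2ρ)/μ)`. -/
theorem statement10 (ρ μ : ℝ) (hρl : -1 < ρ) (hρu : ρ < 0) (hμ : 0 < μ) :
    IsLeast {v : ℝ | ∃ t s : ℝ, 0 < t ∧ 0 < s ∧ v = gfun ρ μ μ t s}
        (8 * (1 - ρ) * μ) ∧
      gfun ρ μ μ ((1 - 2 * ρ) / μ) (1 / ((1 - 2 * ρ) * μ)) = 8 * (1 - ρ) * μ ∧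
      gfun ρ μ μ (1 / ((1 - 2 * ρ) * μ)) ((1 - 2 * ρ) / μ) = 8 * (1 - ρ) * μ ∧
      ∀ t s : ℝ, 0 < t → 0 < s → gfun ρ μ μ t s = 8 * (1 - ρ) * μ →
        (t = (1 - 2 * ρ) / μ ∧ s = 1 / ((1 - 2 * ρ) * μ)) ∨
          (t = 1 / ((1 - 2 * ρ) * μ) ∧ s = (1 - 2 * ρ) / μ) := by
  have hρ : ρ ^ 2 < 1 := by nlinarith
  have hc : 1 ≤ 1 - 2 * ρ := by linarith
  have ht₀ : 0 < (1 - 2 * ρ) / μ := by positivity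
  have hs₀ : 0 < 1 / ((1 - 2 * ρ) * μ) := by positivity
  have hst₀ : 1 / ((1 - 2 * ρ) * μ) ≤ (1 - 2 * ρ) / μ := by
    rw [div_le_div_iff₀ (by positivity) hμ]
    nlinarith [mul_le_mul_of_nonneg_right (one_le_mul_of_one_le_of_one_le hc hc) hμ.le]
  have hg₀ := (gfun_eq_iff_of_le hρ hρu.le hμ hs₀ hst₀).2 ⟨rfl, rfl⟩
  refine ⟨⟨⟨_, _, ht₀, hs₀, hg₀.symm⟩, ?_⟩, hg₀, gfun_comm .. ▸ hg₀, fun t s ht hs hg => ?_⟩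
  · rintro v ⟨t, s, ht, hs, rfl⟩
    rcases le_total s t with hst | hts
    · exact le_gfun_of_le hρ hρu.le hμ.le hs hst
    · exact gfun_comm .. ▸ le_gfun_of_le hρ hρu.le hμ.le ht hts
  · rcases le_total s t with hst | hts
    · exact .inl ((gfun_eq_iff_of_le hρ hρu.le hμ hs hst).1 hg)
    · rw [gfun_comm] at hg
      exact .inr ((gfun_eq_iff_of_le hρ hρu.le hμ ht hts).1 hg).symm
end

section
/- Assume μ1 < μ2 and ρ = ρ̂1. Then inf_{(t,s)∈(0,∞)²} g(t,s) = 4(μ2 + (1−2ρ̂1)·μ1), attained at the unique point (t_A, s_A) = ((1−2ρ̂1)/μ1, 1/(μ2 − 2μ1·ρ̂1)); moreover this minimizer lies on the diagonal: t_A = s_A = √(2(1−ρ̂1)/(μ1² + μ2² − 2ρ̂1·μ1·μ2)). -/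
/-!
Weak duality: for `w ≥ 0` and `z ≥ c`, `z ⬝ Σ⁻¹ z ≥ 2 w ⬝ c - w ⬝ Σ w`. The single dual vector
`w* = (2μ₁, 2μ₂ - 4ρμ₁)` has value `4(μ₂ + (1 - 2ρ)μ₁) + 8ρμ₁(μ₂ - 2ρμ₁)(s - min t s)` at every
`(t, s)`, which gives the lower bound, strict unless `s ≤ t`. Weak duality is an equality when
`Σ w* = c`; for `s ≤ t` this forces `(t, s) = ((1 - 2ρ)/μ₁, 1/(μ₂ - 2μ₁ρ))`, and the quadratic
equation of `ρ̂₁` makes the two coordinates coincide, so this point attains the bound. Conversely,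
if `g(t, s)` equals the bound, `w*` is an interior local maximiser of the dual function, so its
gradient `2(c - Σ w*)` vanishes.
-/

open Matrix

open Filter Topology

section QuadDual

variable {ι : Type*} {S : Matrix ι ι ℝ} {c w z : ι → ℝ}

theorem Matrix.PosDef.isSymm_of_real (hS : S.PosDef) : S.IsSymm :=
  (conjTranspose_eq_transpose_of_trivial S).symm.trans hS.isHermitian.eq

theorem eventually_nonneg_nhds_of_pos [Finite ι] (hw : ∀ i, 0 < w i) : ∀ᶠ v in 𝓝 w, 0 ≤ v := by
  filter_upwards [eventually_all.2 fun i =>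
    ((continuous_apply i).tendsto w).eventually_const_lt (hw i)] with v hv i using (hv i).le

variable [Fintype ι]

theorem Matrix.IsSymm.dotProduct_mulVec_comm (hS : S.IsSymm) (x y : ι → ℝ) :
    x ⬝ᵥ (S *ᵥ y) = y ⬝ᵥ (S *ᵥ x) := by
  rw [dotProduct_mulVec, ← mulVec_transpose, hS.eq, dotProduct_comm]

/-- The Lagrange dual function of the problem of minimising `z ⬝ᵥ (S⁻¹ *ᵥ z)` over `z ≥ c`. -/
noncomputable def quadDual (S : Matrix ι ι ℝ) (c w : ι → ℝ) : ℝ :=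
  2 * (w ⬝ᵥ c) - w ⬝ᵥ (S *ᵥ w)

theorem quadDual_add_smul (hS : S.IsSymm) (d : ι → ℝ) (ε : ℝ) :
    quadDual S c (w + ε • d) =
      quadDual S c w + 2 * (d ⬝ᵥ (c - S *ᵥ w)) * ε - d ⬝ᵥ (S *ᵥ d) * ε ^ 2 := by
  simp only [quadDual, add_dotProduct, dotProduct_add, mulVec_add, mulVec_smul, smul_dotProduct,
    dotProduct_smul, smul_eq_mul, dotProduct_sub, hS.dotProduct_mulVec_comm d w]
  ring

theorem mulVec_eq_of_isLocalMax_quadDual (hS : S.IsSymm) (h : IsLocalMax (quadDual S c) w) :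
    S *ᵥ w = c := by
  set d := c - S *ᵥ w with hd
  have hmax : IsLocalMax (fun ε : ℝ => quadDual S c (w + ε • d)) 0 :=
    IsLocalMax.comp_continuous (f := quadDual S c) (g := fun ε : ℝ => w + ε • d) (b := 0)
      (by simpa using h) (by fun_prop)
  have hderiv : HasDerivAt (fun ε : ℝ => quadDual S c (w + ε • d)) (2 * (d ⬝ᵥ d)) 0 := by
    simp only [quadDual_add_smul hS, ← hd]
    simpa using ((hasDerivAt_id (0:ℝ)).const_mul (2 * (d ⬝ᵥ d)) |>.const_add
      (quadDual S c w)).fun_sub ((hasDerivAt_pow 2 (0:ℝ)).const_mul (d ⬝ᵥ (S *ᵥ d)))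
  have hdd : d ⬝ᵥ d = 0 := by linarith [hmax.hasDerivAt_eq_zero hderiv]
  exact (sub_eq_zero.mp (dotProduct_self_eq_zero.mp hdd)).symm

variable [DecidableEq ι]

theorem quadDual_le_dotProduct_inv_mulVec (hS : S.PosDef) (hw : 0 ≤ w) (hcz : c ≤ z) :
    quadDual S c w ≤ z ⬝ᵥ (S⁻¹ *ᵥ z) := by
  set p := S⁻¹ *ᵥ z
  have hp : S *ᵥ p = z := by
    rw [mulVec_mulVec, mul_nonsing_inv _ (isUnit_iff_isUnit_det _ |>.mp hS.isUnit), one_mulVec]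
  calc quadDual S c w ≤ 2 * (w ⬝ᵥ z) - w ⬝ᵥ (S *ᵥ w) := by
        unfold quadDual; gcongr; exact dotProduct_le_dotProduct_of_nonneg_left hcz hw
    _ = p ⬝ᵥ (S *ᵥ p) - (p - w) ⬝ᵥ (S *ᵥ (p - w)) := by
        rw [← hp]
        simp only [mulVec_sub, sub_dotProduct, dotProduct_sub, hp,
          hS.isSymm_of_real.dotProduct_mulVec_comm p w]
        ring
    _ ≤ p ⬝ᵥ (S *ᵥ p) := by
        simpa using hS.posSemidef.dotProduct_mulVec_nonneg (p - w)
    _ = z ⬝ᵥ p := by rw [hp, dotProduct_comm]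

theorem dotProduct_inv_mulVec_eq_quadDual (hS : S.PosDef) (h : S *ᵥ w = c) :
    c ⬝ᵥ (S⁻¹ *ᵥ c) = quadDual S c w := by
  rw [← h, mulVec_mulVec, nonsing_inv_mul _ (isUnit_iff_isUnit_det _ |>.mp hS.isUnit),
    one_mulVec, quadDual, dotProduct_comm]
  ring

end QuadDual

section Gfun

variable {ρ μ1 μ2 t s : ℝ}

theorem covM_posDef (hρ : |ρ| < 1) (ht : 0 < t) (hs : 0 < s) : (covM ρ t s).PosDef := by
  refine .of_dotProduct_mulVec_pos ?_ fun x hx => ?_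
  · ext i j; fin_cases i <;> fin_cases j <;> rfl
  have hx' : x 0 ≠ 0 ∨ x 1 ≠ 0 := by
    by_contra! h; exact hx (funext fun i => by fin_cases i <;> simp [h.1, h.2])
  have hρ2 : ρ ^ 2 < 1 := (sq_lt_one_iff_abs_lt_one ρ).mpr hρ
  have hm : 0 < min t s := lt_min ht hs
  have hmt := min_le_left t s
  have hms := min_le_right t s
  simp only [covM, star_trivial, mulVec, dotProduct, Fin.sum_univ_two, of_apply, cons_val',
    cons_val_zero, cons_val_one, empty_val', cons_val_fin_one]
  have hq : 0 < x 0 ^ 2 + 2 * ρ * x 0 * x 1 + x 1 ^ 2 := by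
    rcases hx' with h | h <;>
      nlinarith [sq_nonneg (ρ * x 0 + x 1), sq_nonneg (x 0 + ρ * x 1), sq_pos_of_ne_zero h]
  nlinarith [mul_nonneg (sub_nonneg.2 hmt) (sq_nonneg (x 0)),
    mul_nonneg (sub_nonneg.2 hms) (sq_nonneg (x 1)), mul_pos hm hq]

def corner (μ1 μ2 t s : ℝ) : Fin 2 → ℝ := ![1 + μ1 * t, 1 + μ2 * s]

/-- A dual vector independent of `(t, s)`: once `min t s` is replaced by `s`, the coefficients
of `t` and `s` in its dual value vanish. -/
def dualCert (ρ μ1 μ2 : ℝ) : Fin 2 → ℝ := ![2 * μ1, 2 * μ2 - 4 * ρ * μ1]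

theorem quadDual_dualCert :
    quadDual (covM ρ t s) (corner μ1 μ2 t s) (dualCert ρ μ1 μ2) =
      4 * (μ2 + (1 - 2 * ρ) * μ1) + 8 * ρ * μ1 * (μ2 - 2 * ρ * μ1) * (s - min t s) := by
  simp [quadDual, covM, corner, dualCert, dotProduct, mulVec, Fin.sum_univ_two]
  ring

theorem covM_mulVec_dualCert :
    covM ρ t s *ᵥ dualCert ρ μ1 μ2 =
      ![2 * μ1 * t + ρ * min t s * (2 * μ2 - 4 * ρ * μ1),
        2 * ρ * μ1 * min t s + s * (2 * μ2 - 4 * ρ * μ1)] := by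
  ext i; fin_cases i <;> simp [covM, dualCert, mulVec, dotProduct, Fin.sum_univ_two] <;> ring

theorem quadDual_le_of_le {w : Fin 2 → ℝ} {x y : ℝ} (hρ : |ρ| < 1) (ht : 0 < t) (hs : 0 < s)
    (hw : 0 ≤ w) (hx : 1 + μ1 * t ≤ x) (hy : 1 + μ2 * s ≤ y) :
    quadDual (covM ρ t s) (corner μ1 μ2 t s) w ≤ ![x, y] ⬝ᵥ ((covM ρ t s)⁻¹ *ᵥ ![x, y]) :=
  quadDual_le_dotProduct_inv_mulVec (covM_posDef hρ ht hs) hw fun i => by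
    fin_cases i <;> simpa [corner]

theorem quadDual_le_gfun {w : Fin 2 → ℝ} (hρ : |ρ| < 1) (ht : 0 < t) (hs : 0 < s) (hw : 0 ≤ w) :
    quadDual (covM ρ t s) (corner μ1 μ2 t s) w ≤ gfun ρ μ1 μ2 t s :=
  le_csInf ⟨_, _, _, le_rfl, le_rfl, rfl⟩ fun _ ⟨_, _, hx, hy, hv⟩ =>
    hv ▸ quadDual_le_of_le hρ ht hs hw hx hy

theorem gfun_le_quadDual {w : Fin 2 → ℝ} (hρ : |ρ| < 1) (ht : 0 < t) (hs : 0 < s)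
    (h : covM ρ t s *ᵥ w = corner μ1 μ2 t s) :
    gfun ρ μ1 μ2 t s ≤ quadDual (covM ρ t s) (corner μ1 μ2 t s) w := by
  refine csInf_le ⟨_, fun _ ⟨_, _, hx, hy, hv⟩ => hv ▸ quadDual_le_of_le hρ ht hs le_rfl hx hy⟩
    ⟨_, _, le_rfl, le_rfl, ?_⟩
  exact (dotProduct_inv_mulVec_eq_quadDual (covM_posDef hρ ht hs) h).symm

theorem four_mul_le_gfun (hρ0 : 0 ≤ ρ) (hρ1 : ρ < 1) (hμ1 : 0 ≤ μ1) (hμ : 2 * ρ * μ1 ≤ μ2)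
    (ht : 0 < t) (hs : 0 < s) :
    4 * (μ2 + (1 - 2 * ρ) * μ1) ≤ gfun ρ μ1 μ2 t s := by
  have hcert := quadDual_le_gfun (μ1 := μ1) (μ2 := μ2) (w := dualCert ρ μ1 μ2)
    (abs_lt.2 ⟨by linarith, hρ1⟩) ht hs fun i => by fin_cases i <;> simp [dualCert] <;> linarith
  rw [quadDual_dualCert] at hcert
  have : 0 ≤ 8 * ρ * μ1 * (μ2 - 2 * ρ * μ1) * (s - min t s) := by
    have := min_le_right t s
    apply mul_nonneg <;> [positivity; linarith]
  linarith

theorem covM_mulVec_dualCert_eq_corner_iff (hμ1 : μ1 ≠ 0) (hμ : μ2 - 2 * μ1 * ρ ≠ 0)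
    (hst : s ≤ t) :
    covM ρ t s *ᵥ dualCert ρ μ1 μ2 = corner μ1 μ2 t s ↔
      t = (1 - 2 * ρ) / μ1 ∧ s = 1 / (μ2 - 2 * μ1 * ρ) := by
  rw [covM_mulVec_dualCert, min_eq_right hst, corner, eq_div_iff hμ1, eq_div_iff hμ]
  constructor
  · intro h
    have h0 := congrFun h 0
    have h1 := congrFun h 1
    simp only [cons_val_zero, cons_val_one] at h0 h1
    exact ⟨by linear_combination h0 - 2 * ρ * h1, by linear_combination h1⟩
  · rintro ⟨ht, hs⟩
    ext i; fin_cases i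
    · simp only [Fin.zero_eta, cons_val_zero]; linear_combination ht + 2 * ρ * hs
    · simp only [Fin.mk_one, cons_val_one, cons_val_zero]; linear_combination hs

theorem div_eq_one_div_of_quadratic (hμ1 : μ1 ≠ 0) (hμ : μ2 - 2 * μ1 * ρ ≠ 0)
    (hq : 4 * μ1 * ρ ^ 2 - 2 * (μ1 + μ2) * ρ + (μ2 - μ1) = 0) :
    (1 - 2 * ρ) / μ1 = 1 / (μ2 - 2 * μ1 * ρ) := by
  rw [div_eq_div_iff hμ1 hμ]; linear_combination hq

theorem div_eq_sqrt_of_quadratic (hρ : 2 * ρ ≤ 1) (hμ1 : 0 < μ1) (hμ2 : 0 < μ2)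
    (hq : 4 * μ1 * ρ ^ 2 - 2 * (μ1 + μ2) * ρ + (μ2 - μ1) = 0) :
    (1 - 2 * ρ) / μ1 = √(2 * (1 - ρ) / (μ1 ^ 2 + μ2 ^ 2 - 2 * ρ * μ1 * μ2)) := by
  have hQ : 0 < μ1 ^ 2 + μ2 ^ 2 - 2 * ρ * μ1 * μ2 := by
    nlinarith [sq_nonneg (μ1 - μ2), mul_pos hμ1 hμ2]
  have harg : 2 * (1 - ρ) / (μ1 ^ 2 + μ2 ^ 2 - 2 * ρ * μ1 * μ2) = ((1 - 2 * ρ) / μ1) ^ 2 := by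
    rw [div_pow, div_eq_div_iff hQ.ne' (by positivity)]
    linear_combination (-((1 - 2 * ρ) * μ2 + μ1)) * hq
  rw [harg, Real.sqrt_sq (div_nonneg (by linarith) hμ1.le)]

theorem gfun_diag_le (hρ : |ρ| < 1) (hμ1 : μ1 ≠ 0) (hμ : 2 * ρ * μ1 < μ2)
    (hq : 4 * μ1 * ρ ^ 2 - 2 * (μ1 + μ2) * ρ + (μ2 - μ1) = 0) :
    gfun ρ μ1 μ2 (1 / (μ2 - 2 * μ1 * ρ)) (1 / (μ2 - 2 * μ1 * ρ)) ≤
      4 * (μ2 + (1 - 2 * ρ) * μ1) := by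
  have hμ' : 0 < μ2 - 2 * μ1 * ρ := by linarith
  have hsA : 0 < 1 / (μ2 - 2 * μ1 * ρ) := by positivity
  have hfix := (covM_mulVec_dualCert_eq_corner_iff hμ1 hμ'.ne' le_rfl).2
    ⟨(div_eq_one_div_of_quadratic hμ1 hμ'.ne' hq).symm, rfl⟩
  calc gfun ρ μ1 μ2 (1 / (μ2 - 2 * μ1 * ρ)) (1 / (μ2 - 2 * μ1 * ρ))
      ≤ quadDual (covM ρ _ _) (corner μ1 μ2 _ _) (dualCert ρ μ1 μ2) :=
        gfun_le_quadDual hρ hsA hsA hfix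
    _ = 4 * (μ2 + (1 - 2 * ρ) * μ1) := by
        rw [quadDual_dualCert, min_self, sub_self, mul_zero, add_zero]

theorem eq_of_gfun_eq (hρ0 : 0 < ρ) (hρ1 : ρ < 1) (hμ1 : 0 < μ1) (hμ : 2 * ρ * μ1 < μ2)
    (ht : 0 < t) (hs : 0 < s) (h : gfun ρ μ1 μ2 t s = 4 * (μ2 + (1 - 2 * ρ) * μ1)) :
    t = (1 - 2 * ρ) / μ1 ∧ s = 1 / (μ2 - 2 * μ1 * ρ) := by
  have hρ : |ρ| < 1 := abs_lt.2 ⟨by linarith, hρ1⟩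
  have hcert : ∀ i, 0 < dualCert ρ μ1 μ2 i := by
    intro i; fin_cases i <;> simp [dualCert] <;> linarith
  have hle : ∀ w, 0 ≤ w → quadDual (covM ρ t s) (corner μ1 μ2 t s) w ≤
      4 * (μ2 + (1 - 2 * ρ) * μ1) := fun w hw => h ▸ quadDual_le_gfun hρ ht hs hw
  have hst : s ≤ t := by
    have hslack := hle _ fun i => (hcert i).le
    rw [quadDual_dualCert] at hslack
    have hpos : 0 < 8 * ρ * μ1 * (μ2 - 2 * ρ * μ1) := mul_pos (by positivity) (by linarith)
    have : s ≤ min t s := by nlinarith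
    exact this.trans (min_le_left t s)
  have hmax : IsLocalMax (quadDual (covM ρ t s) (corner μ1 μ2 t s)) (dualCert ρ μ1 μ2) := by
    filter_upwards [eventually_nonneg_nhds_of_pos hcert] with w hw
    rw [quadDual_dualCert, min_eq_right hst, sub_self, mul_zero, add_zero]
    exact hle w hw
  exact (covM_mulVec_dualCert_eq_corner_iff hμ1.ne' (by linarith : μ2 - 2 * μ1 * ρ ≠ 0) hst).1
    (mulVec_eq_of_isLocalMax_quadDual (covM_posDef hρ ht hs).isSymm_of_real hmax)

end Gfun

theorem rhoHat1_spec {ρ μ1 μ2 : ℝ}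
    (hρ : ρ = (μ1 + μ2 - √((μ1 + μ2) ^ 2 - 4 * μ1 * (μ2 - μ1))) / (4 * μ1))
    (hμ1 : 0 < μ1) (hμ12 : μ1 < μ2) :
    4 * μ1 * ρ ^ 2 - 2 * (μ1 + μ2) * ρ + (μ2 - μ1) = 0 ∧ 0 < ρ ∧ 2 * ρ * μ1 < μ2 := by
  set D := (μ1 + μ2) ^ 2 - 4 * μ1 * (μ2 - μ1)
  have hD : √D ^ 2 = D := Real.sq_sqrt (by nlinarith)
  have hDlt : √D < μ1 + μ2 := (Real.sqrt_lt' (by linarith)).2 (by nlinarith)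
  have h4 : 4 * μ1 * ρ = μ1 + μ2 - √D := by rw [hρ]; field_simp
  refine ⟨mul_left_cancel₀ (by positivity : 4 * μ1 ≠ 0) ?_,
    pos_of_mul_pos_right (by linarith : 0 < 4 * μ1 * ρ) (by positivity), ?_⟩
  · linear_combination (4 * μ1 * ρ - μ1 - μ2 - √D) * h4 + hD
  · linarith [Real.sqrt_nonneg D]

/-- If `μ₁ < μ₂` and `ρ = ρ̂₁`, then `inf_{(t,s) ∈ (0,∞)²} g(t,s) = 4(μ₂ + (1-2ρ̂₁)μ₁)`,
attained at the unique point `(t_A, s_A) = ((1-2ρ̂₁)/μ₁, 1/(μ₂-2μ₁ρ̂₁))`; moreover this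
minimizer lies on the diagonal: `t_A = s_A = √(2(1-ρ̂₁)/(μ₁² + μ₂² - 2ρ̂₁μ₁μ₂))`. -/
theorem statement12 (ρ μ1 μ2 : ℝ)
    (hρ : ρ = (μ1 + μ2 - Real.sqrt ((μ1 + μ2) ^ 2 - 4 * μ1 * (μ2 - μ1))) / (4 * μ1))
    (hμ1 : 0 < μ1) (hμ12 : μ1 < μ2) :
    IsLeast {v : ℝ | ∃ t s : ℝ, 0 < t ∧ 0 < s ∧ v = gfun ρ μ1 μ2 t s}
        (4 * (μ2 + (1 - 2 * ρ) * μ1)) ∧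
      gfun ρ μ1 μ2 ((1 - 2 * ρ) / μ1) (1 / (μ2 - 2 * μ1 * ρ)) =
        4 * (μ2 + (1 - 2 * ρ) * μ1) ∧
      (∀ t s : ℝ, 0 < t → 0 < s →
        gfun ρ μ1 μ2 t s = 4 * (μ2 + (1 - 2 * ρ) * μ1) →
          t = (1 - 2 * ρ) / μ1 ∧ s = 1 / (μ2 - 2 * μ1 * ρ)) ∧
      (1 - 2 * ρ) / μ1 = 1 / (μ2 - 2 * μ1 * ρ) ∧
      (1 - 2 * ρ) / μ1 =
        Real.sqrt (2 * (1 - ρ) / (μ1 ^ 2 + μ2 ^ 2 - 2 * ρ * μ1 * μ2)) := by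
  obtain ⟨hq, hρ0, hμ⟩ := rhoHat1_spec hρ hμ1 hμ12
  have hμ' : 0 < μ2 - 2 * μ1 * ρ := by linarith
  have hdiag := div_eq_one_div_of_quadratic hμ1.ne' hμ'.ne' hq
  have hsA : 0 < 1 / (μ2 - 2 * μ1 * ρ) := by positivity
  have htA : 0 < (1 - 2 * ρ) / μ1 := hdiag ▸ hsA
  have hρ1 : 2 * ρ < 1 := by linarith [(div_pos_iff_of_pos_right hμ1).1 htA]
  have hlow : ∀ t s, 0 < t → 0 < s → 4 * (μ2 + (1 - 2 * ρ) * μ1) ≤ gfun ρ μ1 μ2 t s :=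
    fun t s => four_mul_le_gfun hρ0.le (by linarith) hμ1.le hμ.le
  have hA : gfun ρ μ1 μ2 ((1 - 2 * ρ) / μ1) (1 / (μ2 - 2 * μ1 * ρ)) =
      4 * (μ2 + (1 - 2 * ρ) * μ1) :=
    le_antisymm (hdiag ▸ gfun_diag_le (abs_lt.2 ⟨by linarith, by linarith⟩) hμ1.ne' hμ hq)
      (hlow _ _ htA hsA)
  refine ⟨⟨⟨_, _, htA, hsA, hA.symm⟩, ?_⟩, hA,
    fun t s ht hs => eq_of_gfun_eq hρ0 (by linarith) hμ1 hμ ht hs, hdiag,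
    div_eq_sqrt_of_quadratic hρ1.le hμ1 (by linarith) hq⟩
  rintro _ ⟨t, s, ht, hs, rfl⟩
  exact hlow t s ht hs
end

section
/- Assume μ1 < μ2 and ρ̂2 < ρ < 1. Then inf_{(t,s)∈(0,∞)²} g(t,s) = 4μ2, and the infimum is attained (at a point where g(t,s) coincides with g2(s) = (1+μ2·s)²/s evaluated at s = 1/μ2). -/
open Matrix

lemma quad_eval (ρ t s x y : ℝ) (hd : t * s - ρ^2 * (min t s)^2 ≠ 0) :
    ![x, y] ⬝ᵥ ((covM ρ t s)⁻¹ *ᵥ ![x, y]) =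
    (s * x^2 - 2 * ρ * (min t s) * x * y + t * y^2) / (t * s - ρ^2 * (min t s)^2) := by
  have hdet : (covM ρ t s).det = t * s - ρ^2 * (min t s)^2 := by
    simp [covM, Matrix.det_fin_two_of]; ring
  rw [Matrix.inv_def, hdet, Ring.inverse_eq_inv']
  simp [covM, Matrix.adjugate_fin_two, Matrix.mulVec, dotProduct, Fin.sum_univ_two]
  field_simp
  ring

lemma det_pos (ρ t s : ℝ) (hρ : ρ^2 < 1) (ht : 0 < t) (hs : 0 < s) :
    0 < t * s - ρ^2 * (min t s)^2 := by
  have hm : 0 < min t s := lt_min ht hs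
  have h1 : ρ^2 * (min t s)^2 < (min t s)^2 := by nlinarith [mul_pos hm hm, sq_nonneg (min t s)]
  have h2 : (min t s)^2 ≤ t * s := by
    have := min_le_left t s; have := min_le_right t s
    nlinarith
  linarith

lemma lower_bound (ρ μ2 t s x y : ℝ) (hρ1 : ρ^2 < 1) (ht : 0 < t) (hs : 0 < s)
    (hμ2 : 0 < μ2) (hy : 1 + μ2 * s ≤ y) :
    4 * μ2 ≤ ![x, y] ⬝ᵥ ((covM ρ t s)⁻¹ *ᵥ ![x, y]) := by
  have hd := det_pos ρ t s hρ1 ht hs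
  rw [quad_eval ρ t s x y hd.ne']
  rw [le_div_iff₀ hd]
  have h0 : (0:ℝ) < 1 + μ2 * s := by positivity
  have hy2 : (1 + μ2 * s)^2 ≤ y^2 := by nlinarith
  nlinarith [sq_nonneg (s * x - ρ * (min t s) * y), sq_nonneg (1 - μ2 * s),
    mul_pos ht hs, sq_nonneg (min t s), mul_nonneg (sq_nonneg (1 - μ2*s)) hd.le,
    mul_le_mul_of_nonneg_left hy2 hd.le]

/-- If `μ₁ < μ₂` and `ρ̂₂ < ρ < 1`, then `inf_{(t,s) ∈ (0,∞)²} g(t,s) = 4μ₂` and the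
infimum is attained, at a point where `g(t,s)` coincides with `g₂(s) = (1+μ₂s)²/s`
(whose value there is `g₂(1/μ₂) = 4μ₂`). -/
theorem statement15 (ρ μ1 μ2 : ℝ) (hρl : (μ1 + μ2) / (2 * μ2) < ρ) (hρu : ρ < 1)
    (hμ1 : 0 < μ1) (hμ12 : μ1 < μ2) :
    IsLeast {v : ℝ | ∃ t s : ℝ, 0 < t ∧ 0 < s ∧ v = gfun ρ μ1 μ2 t s} (4 * μ2) ∧
      ∃ t s : ℝ, 0 < t ∧ 0 < s ∧ gfun ρ μ1 μ2 t s = (1 + μ2 * s) ^ 2 / s ∧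
        gfun ρ μ1 μ2 t s = 4 * μ2 := by
  have hμ2 : 0 < μ2 := hμ1.trans hμ12
  have hρ0 : 0 < ρ := lt_trans (by positivity) hρl
  have hρ1 : ρ^2 < 1 := by nlinarith
  have hc' : μ1 + μ2 < 2 * ρ * μ2 := by
    rw [div_lt_iff₀ (by positivity)] at hρl; nlinarith
  set c : ℝ := 2 * ρ * μ2 - μ1 with hcdef
  have hcμ : μ2 < c := by simp [hcdef]; linarith
  have hc : 0 < c := hμ2.trans hcμ
  set t₀ : ℝ := 1 / c with ht₀def
  set s₀ : ℝ := 1 / μ2 with hs₀def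
  have ht₀ : 0 < t₀ := by positivity
  have hs₀ : 0 < s₀ := by positivity
  have hts : t₀ < s₀ := one_div_lt_one_div_of_lt hμ2 hcμ
  have hmin : min t₀ s₀ = t₀ := min_eq_left hts.le
  -- lower bound for all elements of all gfun sets
  have key : ∀ t s : ℝ, 0 < t → 0 < s → 4 * μ2 ≤ gfun ρ μ1 μ2 t s := by
    intro t s ht hs
    apply le_csInf
    · exact ⟨_, 1 + μ1 * t, 1 + μ2 * s, le_refl _, le_refl _, rfl⟩
    · rintro v ⟨x, y, hx, hy, rfl⟩
      exact lower_bound ρ μ2 t s x y hρ1 ht hs hμ2 hy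
  have hbdd : ∀ t s : ℝ, 0 < t → 0 < s → BddBelow {v : ℝ | ∃ x y : ℝ, 1 + μ1 * t ≤ x ∧ 1 + μ2 * s ≤ y ∧
      v = ![x, y] ⬝ᵥ ((covM ρ t s)⁻¹ *ᵥ ![x, y])} := by
    intro t s ht hs
    exact ⟨4 * μ2, fun v ⟨x, y, hx, hy, hv⟩ => hv ▸ lower_bound ρ μ2 t s x y hρ1 ht hs hμ2 hy⟩
  -- the value at (t₀, s₀) is 4μ2
  have hd := det_pos ρ t₀ s₀ hρ1 ht₀ hs₀
  have hmem : (4 * μ2) ∈ {v : ℝ | ∃ x y : ℝ, 1 + μ1 * t₀ ≤ x ∧ 1 + μ2 * s₀ ≤ y ∧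
      v = ![x, y] ⬝ᵥ ((covM ρ t₀ s₀)⁻¹ *ᵥ ![x, y])} := by
    refine ⟨2 * ρ * μ2 * t₀, 2, ?_, ?_, ?_⟩
    · have : 1 + μ1 * t₀ = 2 * ρ * μ2 * t₀ := by
        rw [ht₀def]; field_simp; ring
      linarith [this.le]
    · rw [hs₀def]; rw [mul_one_div, div_self hμ2.ne']; norm_num
    · rw [quad_eval ρ t₀ s₀ _ _ hd.ne', hmin]
      rw [hmin] at hd
      rw [eq_div_iff hd.ne', ht₀def, hs₀def]
      field_simp
      ring
  have hval : gfun ρ μ1 μ2 t₀ s₀ = 4 * μ2 := by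
    refine le_antisymm (csInf_le (hbdd t₀ s₀ ht₀ hs₀) hmem) (key t₀ s₀ ht₀ hs₀)
  constructor
  · constructor
    · exact ⟨t₀, s₀, ht₀, hs₀, hval.symm⟩
    · rintro v ⟨t, s, ht, hs, rfl⟩
      exact key t s ht hs
  · refine ⟨t₀, s₀, ht₀, hs₀, ?_, hval⟩
    rw [hval, hs₀def, mul_one_div, div_self hμ2.ne', one_div, division_def, inv_inv]
    norm_num [mul_comm]
end

section
/- Assume μ1 < μ2 and −1 < ρ < ρ̂1, and set (t_A, s_A) = ((1−2ρ)/μ1, 1/(μ2 − 2μ1·ρ)), h(ρ) = μ2 − 2(μ1+μ2)·ρ + 3μ1·ρ², a1 = 2μ1³(μ2−2μ1ρ)/h(ρ), a2 = −2ρ·μ1²·(μ2−2μ1ρ)²/h(ρ), a3 = 2(μ2−2μ1ρ)⁴(1−2ρ)/h(ρ). Then h(ρ) > 0, a1 > 0, a3 > 0, and as (t,s) → (0,0) one has the second-order expansion g(t_A + t, s_A + s) = 4(μ2 + (1−2ρ)·μ1) + (a1/2)·t² − a2·t·s + (a3/2)·s² + o(t² + s²). -/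
open Matrix

open Asymptotics Filter Topology

/-!
For `s ≤ t` the quadratic form of `Σ_{ts}⁻¹` is `(x - ρy)²/(t - ρ²s) + y²/s`. Near `(t_A, s_A)`
its gradient at the corner `(1 + μ₁t, 1 + μ₂s)` of the feasible region points into the region,
so by convexity the infimum `g(t, s)` is attained at that corner and equals
`(1 + μ₁t - ρ(1 + μ₂s))²/(t - ρ²s) + (1 + μ₂s)²/s`. Both summands have the shape
`(l + u)²/(m + v)` with `u`, `v` linear in the displacement, and the remainder of its
second-order Taylor polynomial is exactly `-v(mu - lv)²/(m³(m + v))`, which is cubic. The linear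
terms of the two Taylor polynomials cancel, `(t_A, s_A)` being the critical point, and the
quadratic terms add up to the stated ones.
-/

lemma quadratic_pos_of_lt_smaller_root {a β c x : ℝ} (ha : 0 < a)
    (hx : x < (β - √(β ^ 2 - a * c)) / a) : 0 < a * x ^ 2 - 2 * β * x + c := by
  rw [lt_div_iff₀ ha] at hx
  have hsq : β ^ 2 - a * c < (a * x - β) ^ 2 := by
    rcases le_or_gt 0 (β ^ 2 - a * c) with hD | hD
    · have hroot := Real.sq_sqrt hD
      have hnn := Real.sqrt_nonneg (β ^ 2 - a * c)
      nlinarith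
    · nlinarith [sq_nonneg (a * x - β)]
  exact pos_of_mul_pos_right (by nlinarith : 0 < a * (a * x ^ 2 - 2 * β * x + c)) ha.le

lemma lt_of_lt_smaller_root {a β c x y : ℝ} (ha : 0 < a)
    (hx : x < (β - √(β ^ 2 - a * c)) / a) (hy : a * y ^ 2 - 2 * β * y + c ≤ 0) : x < y := by
  rw [lt_div_iff₀ ha] at hx
  have hsq : (a * y - β) ^ 2 ≤ β ^ 2 - a * c := by nlinarith
  have habs := (abs_le.1 (Real.abs_le_sqrt hsq)).1
  nlinarith

lemma covM_quadForm {ρ t s : ℝ} (hs : 0 < s) (hst : s ≤ t) (hρ : ρ ^ 2 < 1) (x y : ℝ) :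
    ![x, y] ⬝ᵥ ((covM ρ t s)⁻¹ *ᵥ ![x, y]) = (x - ρ * y) ^ 2 / (t - ρ ^ 2 * s) + y ^ 2 / s := by
  have hD : 0 < t - ρ ^ 2 * s := by nlinarith
  rw [covM, min_eq_right hst, Matrix.inv_def, Matrix.adjugate_fin_two_of, Matrix.det_fin_two_of,
    Ring.inverse_eq_inv]
  simp only [smul_mulVec, mulVec_cons, mulVec_empty, dotProduct, Fin.sum_univ_two, cons_val_zero,
    cons_val_one, cons_val_fin_one, head_cons, tail_cons, Function.comp_apply, Pi.smul_apply,
    Pi.add_apply, smul_eq_mul, mul_neg, add_zero]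
  obtain ⟨D, rfl⟩ : ∃ D, t = D + ρ ^ 2 * s := ⟨t - ρ ^ 2 * s, by ring⟩
  rw [add_sub_cancel_right] at hD ⊢
  rw [show (D + ρ ^ 2 * s) * s - ρ * s * (ρ * s) = s * D by ring]
  field_simp
  ring

lemma quadForm_corner_le {ρ t s a b x y : ℝ} (hs : 0 < s) (hD : 0 < t - ρ ^ 2 * s)
    (ha : ρ * b ≤ a) (hb : ρ * s * a ≤ t * b) (hx : a ≤ x) (hy : b ≤ y) :
    (a - ρ * b) ^ 2 / (t - ρ ^ 2 * s) + b ^ 2 / s ≤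
      (x - ρ * y) ^ 2 / (t - ρ ^ 2 * s) + y ^ 2 / s := by
  rw [div_add_div _ _ hD.ne' hs.ne', div_add_div _ _ hD.ne' hs.ne']
  gcongr ?_ / _
  nlinarith [mul_nonneg hs.le (sq_nonneg (x - ρ * y - (a - ρ * b))),
    mul_nonneg hD.le (sq_nonneg (y - b)),
    mul_nonneg (mul_nonneg hs.le (sub_nonneg.2 ha)) (sub_nonneg.2 hx),
    mul_nonneg (sub_nonneg.2 hy) (sub_nonneg.2 hb)]

lemma gfun_eq_of_corner {ρ μ1 μ2 t s : ℝ} (hs : 0 < s) (hst : s ≤ t) (hρ : ρ ^ 2 < 1)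
    (ha : ρ * (1 + μ2 * s) ≤ 1 + μ1 * t) (hb : ρ * s * (1 + μ1 * t) ≤ t * (1 + μ2 * s)) :
    gfun ρ μ1 μ2 t s =
      (1 + μ1 * t - ρ * (1 + μ2 * s)) ^ 2 / (t - ρ ^ 2 * s) + (1 + μ2 * s) ^ 2 / s := by
  have hD : 0 < t - ρ ^ 2 * s := by nlinarith
  refine IsLeast.csInf_eq ⟨⟨_, _, le_rfl, le_rfl, (covM_quadForm hs hst hρ _ _).symm⟩, ?_⟩
  rintro v ⟨x, y, hx, hy, rfl⟩
  rw [covM_quadForm hs hst hρ]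
  exact quadForm_corner_le hs hD ha hb hx hy

lemma gfun_eventuallyEq {ρ μ1 μ2 t s : ℝ} (hs : 0 < s) (hst : s < t) (hρ : ρ ^ 2 < 1)
    (ha : ρ * (1 + μ2 * s) < 1 + μ1 * t) (hb : ρ * s * (1 + μ1 * t) < t * (1 + μ2 * s)) :
    (fun p : ℝ × ℝ => gfun ρ μ1 μ2 (t + p.1) (s + p.2)) =ᶠ[𝓝 0] fun p =>
      (1 + μ1 * (t + p.1) - ρ * (1 + μ2 * (s + p.2))) ^ 2 / (t + p.1 - ρ ^ 2 * (s + p.2)) +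
        (1 + μ2 * (s + p.2)) ^ 2 / (s + p.2) := by
  have hshift : Tendsto (fun p : ℝ × ℝ => (t + p.1, s + p.2)) (𝓝 0) (𝓝 (t, s)) := by
    simpa using ((continuous_const.add continuous_fst).prodMk
      (continuous_const.add continuous_snd)).tendsto (0 : ℝ × ℝ)
  have hopen : IsOpen {z : ℝ × ℝ | 0 < z.2 ∧ z.2 < z.1 ∧
      ρ * (1 + μ2 * z.2) < 1 + μ1 * z.1 ∧ ρ * z.2 * (1 + μ1 * z.1) < z.1 * (1 + μ2 * z.2)} := by
    refine (isOpen_lt ?_ ?_).and ((isOpen_lt ?_ ?_).and ((isOpen_lt ?_ ?_).and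
      (isOpen_lt ?_ ?_))) <;> fun_prop
  filter_upwards [hshift.eventually (hopen.mem_nhds ⟨hs, hst, ha, hb⟩)] with p ⟨h1, h2, h3, h4⟩
  exact gfun_eq_of_corner h1 h2.le hρ h3.le h4.le

/-- The second-order Taylor polynomial of `(u, v) ↦ (l + u)² / (m + v)` at `(0, 0)`. -/
noncomputable def sqDivTaylor (l m u v : ℝ) : ℝ :=
  l ^ 2 / m + l * (2 * m * u - l * v) / m ^ 2 + (m * u - l * v) ^ 2 / m ^ 3

lemma sq_div_eq_sqDivTaylor_sub {l m u v : ℝ} (hm : m ≠ 0) (hmv : m + v ≠ 0) :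
    (l + u) ^ 2 / (m + v) = sqDivTaylor l m u v - v * (m * u - l * v) ^ 2 / (m ^ 3 * (m + v)) := by
  unfold sqDivTaylor
  field_simp
  ring

lemma sq_div_sub_sqDivTaylor_isLittleO {α : Type*} {f : Filter α} {k u v : α → ℝ} {l m : ℝ}
    (hm : m ≠ 0) (hu : (fun x => u x ^ 2) =O[f] k) (hv : (fun x => v x ^ 2) =O[f] k)
    (hv0 : Tendsto v f (𝓝 0)) :
    (fun x => (l + u x) ^ 2 / (m + v x) - sqDivTaylor l m (u x) (v x)) =o[f] k := by
  have hden : Tendsto (fun x => m + v x) f (𝓝 m) := by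
    simpa using tendsto_const_nhds.add hv0
  have hsq : (fun x => (m * u x - l * v x) ^ 2) =O[f] k := by
    refine (isBigO_of_le f fun x => ?_).trans ((hu.const_mul_left (2 * m ^ 2)).add
      (hv.const_mul_left (2 * l ^ 2)))
    rw [Real.norm_of_nonneg (by positivity), Real.norm_of_nonneg (by positivity)]
    nlinarith [sq_nonneg (m * u x + l * v x)]
  have hinv : (fun x => (m ^ 3 * (m + v x))⁻¹) =O[f] fun _ => (1 : ℝ) :=
    ((tendsto_const_nhds.mul hden).inv₀ (by positivity)).isBigO_one ℝ
  have hrem := (((isLittleO_one_iff ℝ).2 hv0).mul_isBigO hsq).mul_isBigO hinv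
  refine hrem.neg_left.congr' ?_ (by simp)
  filter_upwards [hden.eventually_ne hm] with x hx
  rw [sq_div_eq_sqDivTaylor_sub hm hx]
  simp only [div_eq_mul_inv]
  ring

lemma isBigO_sq_linear (a b : ℝ) (f : Filter (ℝ × ℝ)) :
    (fun p : ℝ × ℝ => (a * p.1 + b * p.2) ^ 2) =O[f] fun p => p.1 ^ 2 + p.2 ^ 2 := by
  refine IsBigO.of_bound (a ^ 2 + b ^ 2) (Eventually.of_forall fun p => ?_)
  rw [Real.norm_of_nonneg (by positivity), Real.norm_of_nonneg (by positivity)]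
  nlinarith [sq_nonneg (a * p.2 - b * p.1)]

lemma sq_div_sub_sqDivTaylor_isLittleO_linear (l : ℝ) {m : ℝ} (a b c d : ℝ) (hm : m ≠ 0) :
    (fun p : ℝ × ℝ => (l + (a * p.1 + b * p.2)) ^ 2 / (m + (c * p.1 + d * p.2)) -
      sqDivTaylor l m (a * p.1 + b * p.2) (c * p.1 + d * p.2)) =o[𝓝 0]
        fun p => p.1 ^ 2 + p.2 ^ 2 :=
  sq_div_sub_sqDivTaylor_isLittleO hm (isBigO_sq_linear a b _) (isBigO_sq_linear c d _)
    ((by fun_prop : Continuous fun p : ℝ × ℝ => c * p.1 + d * p.2).tendsto' _ _ (by simp))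

section Minimizer

variable {ρ μ1 μ2 : ℝ}

lemma corner_conditions_at_minimizer (hμ1 : 0 < μ1) (hw : 0 < μ2 - 2 * μ1 * ρ)
    (hh : 0 < μ2 - 2 * (μ1 + μ2) * ρ + 3 * μ1 * ρ ^ 2)
    (hq : 0 < 4 * μ1 * ρ ^ 2 - 2 * (μ1 + μ2) * ρ + (μ2 - μ1)) :
    0 < 1 / (μ2 - 2 * μ1 * ρ) ∧ 1 / (μ2 - 2 * μ1 * ρ) < (1 - 2 * ρ) / μ1 ∧
      ρ * (1 + μ2 * (1 / (μ2 - 2 * μ1 * ρ))) < 1 + μ1 * ((1 - 2 * ρ) / μ1) ∧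
      ρ * (1 / (μ2 - 2 * μ1 * ρ)) * (1 + μ1 * ((1 - 2 * ρ) / μ1)) <
        (1 - 2 * ρ) / μ1 * (1 + μ2 * (1 / (μ2 - 2 * μ1 * ρ))) := by
  generalize hw_def : μ2 - 2 * μ1 * ρ = w at hw ⊢
  refine ⟨by positivity, ?_, ?_, ?_⟩ <;> rw [← sub_pos]
  · refine (div_pos hq (mul_pos hμ1 hw)).trans_eq ?_
    field_simp
    rw [← hw_def]
    ring
  · refine (div_pos (mul_pos two_pos hh) hw).trans_eq ?_
    field_simp
    rw [← hw_def]
    ring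
  · refine (div_pos (mul_pos two_pos hh) (mul_pos hμ1 hw)).trans_eq ?_
    field_simp
    rw [← hw_def]
    ring

lemma sqDivTaylor_add_sqDivTaylor_at_minimizer (hμ1 : 0 < μ1) (hw : 0 < μ2 - 2 * μ1 * ρ)
    (hh : 0 < μ2 - 2 * (μ1 + μ2) * ρ + 3 * μ1 * ρ ^ 2) (x y : ℝ) :
    sqDivTaylor (1 + μ1 * ((1 - 2 * ρ) / μ1) - ρ * (1 + μ2 * (1 / (μ2 - 2 * μ1 * ρ))))
        ((1 - 2 * ρ) / μ1 - ρ ^ 2 * (1 / (μ2 - 2 * μ1 * ρ))) (μ1 * x - ρ * μ2 * y) (x - ρ ^ 2 * y) +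
      sqDivTaylor (1 + μ2 * (1 / (μ2 - 2 * μ1 * ρ))) (1 / (μ2 - 2 * μ1 * ρ)) (μ2 * y) y =
    4 * (μ2 + (1 - 2 * ρ) * μ1) +
      2 * μ1 ^ 3 * (μ2 - 2 * μ1 * ρ) / (μ2 - 2 * (μ1 + μ2) * ρ + 3 * μ1 * ρ ^ 2) / 2 * x ^ 2 -
      -2 * ρ * μ1 ^ 2 * (μ2 - 2 * μ1 * ρ) ^ 2 / (μ2 - 2 * (μ1 + μ2) * ρ + 3 * μ1 * ρ ^ 2) * x * y +
      2 * (μ2 - 2 * μ1 * ρ) ^ 4 * (1 - 2 * ρ) / (μ2 - 2 * (μ1 + μ2) * ρ + 3 * μ1 * ρ ^ 2) / 2 *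
        y ^ 2 := by
  generalize hw_def : μ2 - 2 * μ1 * ρ = w at hw ⊢
  have hl : 1 + μ1 * ((1 - 2 * ρ) / μ1) - ρ * (1 + μ2 * (1 / w)) =
      2 * (μ2 - 2 * (μ1 + μ2) * ρ + 3 * μ1 * ρ ^ 2) / w := by
    field_simp
    rw [← hw_def]
    ring
  have hm : (1 - 2 * ρ) / μ1 - ρ ^ 2 * (1 / w) =
      (μ2 - 2 * (μ1 + μ2) * ρ + 3 * μ1 * ρ ^ 2) / (μ1 * w) := by
    field_simp
    rw [← hw_def]
    ring
  have hl' : 1 + μ2 * (1 / w) = 2 * (μ2 - μ1 * ρ) / w := by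
    field_simp
    rw [← hw_def]
    ring
  rw [hl, hm, hl']
  unfold sqDivTaylor
  generalize hh_def : μ2 - 2 * (μ1 + μ2) * ρ + 3 * μ1 * ρ ^ 2 = h at hh ⊢
  field_simp
  subst hh_def hw_def
  ring

end Minimizer

/-- Second-order expansion of `g` at its minimizer `(t_A, s_A)` when `μ₁ < μ₂` and
`-1 < ρ < ρ̂₁`: with `h(ρ) = μ₂ - 2(μ₁+μ₂)ρ + 3μ₁ρ²`, `a₁ = 2μ₁³(μ₂-2μ₁ρ)/h(ρ)`,
`a₂ = -2ρμ₁²(μ₂-2μ₁ρ)²/h(ρ)`, `a₃ = 2(μ₂-2μ₁ρ)⁴(1-2ρ)/h(ρ)`, one has `h(ρ) > 0`,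
`a₁ > 0`, `a₃ > 0`, and
`g(t_A+t, s_A+s) = 4(μ₂+(1-2ρ)μ₁) + (a₁/2)t² - a₂ts + (a₃/2)s² + o(t²+s²)` as
`(t,s) → (0,0)`. -/
theorem statement16 (ρ μ1 μ2 : ℝ) (hρl : -1 < ρ)
    (hρu : ρ < (μ1 + μ2 - Real.sqrt ((μ1 + μ2) ^ 2 - 4 * μ1 * (μ2 - μ1))) / (4 * μ1))
    (hμ1 : 0 < μ1) (hμ12 : μ1 < μ2) :
    0 < μ2 - 2 * (μ1 + μ2) * ρ + 3 * μ1 * ρ ^ 2 ∧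
      0 < 2 * μ1 ^ 3 * (μ2 - 2 * μ1 * ρ) / (μ2 - 2 * (μ1 + μ2) * ρ + 3 * μ1 * ρ ^ 2) ∧
      0 < 2 * (μ2 - 2 * μ1 * ρ) ^ 4 * (1 - 2 * ρ) /
          (μ2 - 2 * (μ1 + μ2) * ρ + 3 * μ1 * ρ ^ 2) ∧
      (fun p : ℝ × ℝ =>
          gfun ρ μ1 μ2 ((1 - 2 * ρ) / μ1 + p.1) (1 / (μ2 - 2 * μ1 * ρ) + p.2) -
            (4 * (μ2 + (1 - 2 * ρ) * μ1) +
              2 * μ1 ^ 3 * (μ2 - 2 * μ1 * ρ) /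
                  (μ2 - 2 * (μ1 + μ2) * ρ + 3 * μ1 * ρ ^ 2) / 2 * p.1 ^ 2 -
              -2 * ρ * μ1 ^ 2 * (μ2 - 2 * μ1 * ρ) ^ 2 /
                  (μ2 - 2 * (μ1 + μ2) * ρ + 3 * μ1 * ρ ^ 2) * p.1 * p.2 +
              2 * (μ2 - 2 * μ1 * ρ) ^ 4 * (1 - 2 * ρ) /
                  (μ2 - 2 * (μ1 + μ2) * ρ + 3 * μ1 * ρ ^ 2) / 2 * p.2 ^ 2)) =o[nhds (0, 0)]
        (fun p : ℝ × ℝ => p.1 ^ 2 + p.2 ^ 2) := by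
  -- `ρ̂₁` is the smaller root of `4μ₁ρ² - 2(μ₁ + μ₂)ρ + (μ₂ - μ₁)`, which is `-μ₁` at `ρ = 1/2`.
  have hq := quadratic_pos_of_lt_smaller_root (by positivity) hρu
  have hρ_half : ρ < 1 / 2 := lt_of_lt_smaller_root (by positivity) hρu (by nlinarith)
  have hρ2 : ρ ^ 2 < 1 := by nlinarith
  have hw : 0 < μ2 - 2 * μ1 * ρ := by nlinarith
  have hh : 0 < μ2 - 2 * (μ1 + μ2) * ρ + 3 * μ1 * ρ ^ 2 := by nlinarith
  have h12ρ : 0 < 1 - 2 * ρ := by linarith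
  refine ⟨hh, by positivity, by positivity, ?_⟩
  obtain ⟨hs, hst, ha, hb⟩ := corner_conditions_at_minimizer hμ1 hw hh hq
  have hm : 0 < (1 - 2 * ρ) / μ1 - ρ ^ 2 * (1 / (μ2 - 2 * μ1 * ρ)) := by nlinarith
  have hexp := (sq_div_sub_sqDivTaylor_isLittleO_linear
      (1 + μ1 * ((1 - 2 * ρ) / μ1) - ρ * (1 + μ2 * (1 / (μ2 - 2 * μ1 * ρ))))
      μ1 (-(ρ * μ2)) 1 (-ρ ^ 2) hm.ne').add
    (sq_div_sub_sqDivTaylor_isLittleO_linear (1 + μ2 * (1 / (μ2 - 2 * μ1 * ρ))) 0 μ2 0 1 hs.ne')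
  refine hexp.congr' ?_ EventuallyEq.rfl
  filter_upwards [gfun_eventuallyEq hs hst hρ2 ha hb] with p hp
  rw [hp, ← sqDivTaylor_add_sqDivTaylor_at_minimizer hμ1 hw hh]
  unfold sqDivTaylor
  ring
end

section
/- Let (Ω, 𝓕, ℙ) be a probability space and let A_1,…,A_n and B_1,…,B_m be events in 𝓕 with n, m ≥ 2. Then Σ_{k=1}^n Σ_{l=1}^m ℙ(A_k ∩ B_l) ≥ ℙ( ⋃_{k=1}^n ⋃_{l=1}^m (A_k ∩ B_l) ) ≥ Σ_{k=1}^n Σ_{l=1}^m ℙ(A_k ∩ B_l) − Σ_{k=1}^n Σ_{1≤l1<l2≤m} ℙ(A_k ∩ B_{l1} ∩ B_{l2}) − Σ_{l=1}^m Σ_{1≤k1<k2≤n} ℙ(A_{k1} ∩ A_{k2} ∩ B_l). -/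
open MeasureTheory Finset

private lemma pairswap {m : ℕ} (v : Fin m → ℝ) :
    ∑ l1 : Fin m, ∑ l2 ∈ Finset.univ.filter (fun l2 => l2 < l1), v l1 * v l2
      = ∑ l1 : Fin m, ∑ l2 ∈ Finset.univ.filter (fun l2 => l1 < l2), v l1 * v l2 := by
  rw [Finset.sum_comm' (t' := Finset.univ)
      (s' := fun l2 => Finset.univ.filter (fun l1 => l2 < l1))
      (by intro x y; simp)]
  exact Finset.sum_congr rfl fun l1 _ => Finset.sum_congr rfl fun l2 _ => mul_comm _ _

private lemma pairsum {m : ℕ} (v : Fin m → ℝ) :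
    ∑ l1 : Fin m, ∑ l2 ∈ Finset.univ.filter (fun l2 => l1 < l2), v l1 * v l2
      = ((∑ l, v l) ^ 2 - ∑ l, v l ^ 2) / 2 := by
  have h1 : (∑ l, v l) ^ 2 = ∑ l1 : Fin m, ∑ l2 : Fin m, v l1 * v l2 := by
    rw [sq, Finset.sum_mul_sum]
  have hsplit : ∀ l1 : Fin m, ∑ l2 : Fin m, v l1 * v l2
      = (∑ l2 ∈ Finset.univ.filter (fun l2 => l1 < l2), v l1 * v l2)
        + ((∑ l2 ∈ Finset.univ.filter (fun l2 => l2 < l1), v l1 * v l2) + v l1 ^ 2) := by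
    intro l1
    rw [← Finset.sum_filter_add_sum_filter_not Finset.univ (fun l2 => l1 < l2)]
    congr 1
    have : Finset.univ.filter (fun l2 => ¬ l1 < l2)
        = insert l1 (Finset.univ.filter (fun l2 => l2 < l1)) := by
      ext l2
      simp [not_lt, le_iff_lt_or_eq, or_comm]
    rw [this, Finset.sum_insert (by simp)]
    rw [add_comm]
    congr 1
    ring
  have h2 := h1
  rw [Finset.sum_congr rfl (fun l1 _ => hsplit l1), Finset.sum_add_distrib,
    Finset.sum_add_distrib, pairswap] at h2
  linarith

private lemma keyineq (a b : ℕ) :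
    (a : ℝ) * b - (a : ℝ) * (((b : ℝ) ^ 2 - b) / 2) - (b : ℝ) * (((a : ℝ) ^ 2 - a) / 2)
      ≤ if 1 ≤ a ∧ 1 ≤ b then 1 else 0 := by
  match a, b with
  | 0, b => norm_num
  | a + 1, 0 => norm_num
  | 1, 1 => norm_num
  | 1, b + 2 =>
    rw [if_pos ⟨le_refl 1, by omega⟩]
    have hb : (0:ℝ) ≤ (b:ℝ) := Nat.cast_nonneg b
    push_cast
    nlinarith [sq_nonneg ((b:ℝ))]
  | a + 2, 1 =>
    rw [if_pos ⟨by omega, le_refl 1⟩]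
    have ha : (0:ℝ) ≤ (a:ℝ) := Nat.cast_nonneg a
    push_cast
    nlinarith [sq_nonneg ((a:ℝ))]
  | a + 2, b + 2 =>
    rw [if_pos ⟨by omega, by omega⟩]
    have ha : (0:ℝ) ≤ (a:ℝ) := Nat.cast_nonneg a
    have hb : (0:ℝ) ≤ (b:ℝ) := Nat.cast_nonneg b
    push_cast
    nlinarith [mul_nonneg ha hb, mul_nonneg (mul_nonneg ha hb) ha,
      mul_nonneg (mul_nonneg ha hb) hb, mul_nonneg (mul_nonneg ha ha) hb,
      mul_nonneg (mul_nonneg hb hb) ha, sq_nonneg ((a:ℝ)+(b:ℝ))]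

/-- Generalized Bonferroni inequality: for events `A₁,…,Aₙ` and `B₁,…,Bₘ` (`n, m ≥ 2`),
`∑ₖ∑ₗ ℙ(Aₖ ∩ Bₗ) ≥ ℙ(⋃ₖ⋃ₗ (Aₖ ∩ Bₗ))
  ≥ ∑ₖ∑ₗ ℙ(Aₖ ∩ Bₗ) - ∑ₖ ∑_{l₁<l₂} ℙ(Aₖ ∩ B_{l₁} ∩ B_{l₂})
    - ∑ₗ ∑_{k₁<k₂} ℙ(A_{k₁} ∩ A_{k₂} ∩ Bₗ)`. -/
theorem statement18 {Ω : Type*} [MeasurableSpace Ω] (P : Measure Ω)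
    [IsProbabilityMeasure P] (n m : ℕ) (hn : 2 ≤ n) (hm : 2 ≤ m)
    (A : Fin n → Set Ω) (B : Fin m → Set Ω)
    (hA : ∀ k, MeasurableSet (A k)) (hB : ∀ l, MeasurableSet (B l)) :
    (P (⋃ k, ⋃ l, A k ∩ B l)).toReal ≤
        ∑ k : Fin n, ∑ l : Fin m, (P (A k ∩ B l)).toReal ∧
      ∑ k : Fin n, ∑ l : Fin m, (P (A k ∩ B l)).toReal -
          (∑ k : Fin n, ∑ l1 : Fin m, ∑ l2 ∈ Finset.univ.filter (fun l2 => l1 < l2),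
            (P (A k ∩ B l1 ∩ B l2)).toReal) -
          (∑ l : Fin m, ∑ k1 : Fin n, ∑ k2 ∈ Finset.univ.filter (fun k2 => k1 < k2),
            (P (A k1 ∩ A k2 ∩ B l)).toReal) ≤
        (P (⋃ k, ⋃ l, A k ∩ B l)).toReal := by
  classical
  have hUm : MeasurableSet (⋃ k, ⋃ l, A k ∩ B l) :=
    MeasurableSet.iUnion fun k => MeasurableSet.iUnion fun l => (hA k).inter (hB l)
  have hind : ∀ (s : Set Ω), MeasurableSet s →
      Integrable (s.indicator (1 : Ω → ℝ)) P :=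
    fun s hs => (integrable_const (1 : ℝ)).indicator hs
  constructor
  · -- union bound
    have h1 : P (⋃ k, ⋃ l, A k ∩ B l) ≤ ∑ k : Fin n, ∑ l : Fin m, P (A k ∩ B l) := by
      refine (measure_iUnion_fintype_le _ _).trans ?_
      exact Finset.sum_le_sum fun k _ => measure_iUnion_fintype_le _ _
    have hne : (∑ k : Fin n, ∑ l : Fin m, P (A k ∩ B l)) ≠ ⊤ :=
      (ENNReal.sum_lt_top.mpr fun k _ =>
        ENNReal.sum_lt_top.mpr fun l _ => measure_lt_top _ _).ne
    calc (P (⋃ k, ⋃ l, A k ∩ B l)).toReal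
        ≤ (∑ k : Fin n, ∑ l : Fin m, P (A k ∩ B l)).toReal :=
          (ENNReal.toReal_le_toReal (measure_ne_top _ _) hne).mpr h1
      _ = ∑ k : Fin n, ∑ l : Fin m, (P (A k ∩ B l)).toReal := by
          rw [ENNReal.toReal_sum (fun k _ =>
            (ENNReal.sum_lt_top.mpr fun l _ => measure_lt_top _ _).ne)]
          exact Finset.sum_congr rfl fun k _ =>
            ENNReal.toReal_sum (fun l _ => measure_ne_top _ _)
  · -- Bonferroni lower bound via integrals
    have hf1 : Integrable (fun ω => ∑ k : Fin n, ∑ l : Fin m,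
        (A k ∩ B l).indicator (1 : Ω → ℝ) ω) P :=
      integrable_finset_sum _ fun k _ => integrable_finset_sum _ fun l _ =>
        hind _ ((hA k).inter (hB l))
    have hf2 : Integrable (fun ω => ∑ k : Fin n, ∑ l1 : Fin m,
        ∑ l2 ∈ Finset.univ.filter (fun l2 => l1 < l2),
        (A k ∩ B l1 ∩ B l2).indicator (1 : Ω → ℝ) ω) P :=
      integrable_finset_sum _ fun k _ => integrable_finset_sum _ fun l1 _ =>
        integrable_finset_sum _ fun l2 _ =>
          hind _ (((hA k).inter (hB l1)).inter (hB l2))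
    have hf3 : Integrable (fun ω => ∑ l : Fin m, ∑ k1 : Fin n,
        ∑ k2 ∈ Finset.univ.filter (fun k2 => k1 < k2),
        (A k1 ∩ A k2 ∩ B l).indicator (1 : Ω → ℝ) ω) P :=
      integrable_finset_sum _ fun l _ => integrable_finset_sum _ fun k1 _ =>
        integrable_finset_sum _ fun k2 _ =>
          hind _ (((hA k1).inter (hA k2)).inter (hB l))
    -- pointwise inequality
    have hpt : ∀ ω, (∑ k : Fin n, ∑ l : Fin m, (A k ∩ B l).indicator (1 : Ω → ℝ) ω)
        - (∑ k : Fin n, ∑ l1 : Fin m, ∑ l2 ∈ Finset.univ.filter (fun l2 => l1 < l2),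
            (A k ∩ B l1 ∩ B l2).indicator (1 : Ω → ℝ) ω)
        - (∑ l : Fin m, ∑ k1 : Fin n, ∑ k2 ∈ Finset.univ.filter (fun k2 => k1 < k2),
            (A k1 ∩ A k2 ∩ B l).indicator (1 : Ω → ℝ) ω)
        ≤ (⋃ k, ⋃ l, A k ∩ B l).indicator (1 : Ω → ℝ) ω := by
      intro ω
      set u : Fin n → ℝ := fun k => if ω ∈ A k then 1 else 0 with hu
      set v : Fin m → ℝ := fun l => if ω ∈ B l then 1 else 0 with hv
      set a : ℕ := (Finset.univ.filter (fun k => ω ∈ A k)).card with ha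
      set b : ℕ := (Finset.univ.filter (fun l => ω ∈ B l)).card with hb
      have hsu : ∑ k, u k = (a : ℝ) := by
        simp only [hu, ha]; exact Finset.sum_boole _ _
      have hsv : ∑ l, v l = (b : ℝ) := by
        simp only [hv, hb]; exact Finset.sum_boole _ _
      have hsu2 : ∑ k, u k ^ 2 = (a : ℝ) := by
        rw [← hsu]; exact Finset.sum_congr rfl fun k _ => by
          by_cases h : ω ∈ A k <;> simp [hu, h]
      have hsv2 : ∑ l, v l ^ 2 = (b : ℝ) := by
        rw [← hsv]; exact Finset.sum_congr rfl fun l _ => by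
          by_cases h : ω ∈ B l <;> simp [hv, h]
      have e1 : ∀ k l, (A k ∩ B l).indicator (1 : Ω → ℝ) ω = u k * v l := by
        intro k l
        by_cases h1 : ω ∈ A k <;> by_cases h2 : ω ∈ B l <;>
          simp [Set.indicator_apply, h1, h2, hu, hv]
      have e2 : ∀ k l1 l2, (A k ∩ B l1 ∩ B l2).indicator (1 : Ω → ℝ) ω
          = u k * (v l1 * v l2) := by
        intro k l1 l2
        by_cases h1 : ω ∈ A k <;> by_cases h2 : ω ∈ B l1 <;> by_cases h3 : ω ∈ B l2 <;>
          simp [Set.indicator_apply, h1, h2, h3, hu, hv]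
      have e3 : ∀ k1 k2 l, (A k1 ∩ A k2 ∩ B l).indicator (1 : Ω → ℝ) ω
          = v l * (u k1 * u k2) := by
        intro k1 k2 l
        by_cases h1 : ω ∈ A k1 <;> by_cases h2 : ω ∈ A k2 <;> by_cases h3 : ω ∈ B l <;>
          simp [Set.indicator_apply, h1, h2, h3, hu, hv]
        <;> ring
      have E1 : (∑ k : Fin n, ∑ l : Fin m, (A k ∩ B l).indicator (1 : Ω → ℝ) ω)
          = (a : ℝ) * b := by
        simp_rw [e1]
        rw [← hsu, ← hsv, Finset.sum_mul_sum]
      have E2 : (∑ k : Fin n, ∑ l1 : Fin m, ∑ l2 ∈ Finset.univ.filter (fun l2 => l1 < l2),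
            (A k ∩ B l1 ∩ B l2).indicator (1 : Ω → ℝ) ω)
          = (a : ℝ) * (((b : ℝ) ^ 2 - b) / 2) := by
        have hC : ∑ l1 : Fin m, ∑ l2 ∈ Finset.univ.filter (fun l2 => l1 < l2),
            v l1 * v l2 = ((b : ℝ) ^ 2 - b) / 2 := by rw [pairsum, hsv, hsv2]
        simp_rw [e2]
        calc ∑ k : Fin n, ∑ l1 : Fin m, ∑ l2 ∈ Finset.univ.filter (fun l2 => l1 < l2),
              u k * (v l1 * v l2)
            = ∑ k : Fin n, u k * (((b : ℝ) ^ 2 - b) / 2) := by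
              refine Finset.sum_congr rfl fun k _ => ?_
              rw [← hC, Finset.mul_sum]
              exact Finset.sum_congr rfl fun l1 _ => by rw [Finset.mul_sum]
          _ = (a : ℝ) * (((b : ℝ) ^ 2 - b) / 2) := by rw [← Finset.sum_mul, hsu]
      have E3 : (∑ l : Fin m, ∑ k1 : Fin n, ∑ k2 ∈ Finset.univ.filter (fun k2 => k1 < k2),
            (A k1 ∩ A k2 ∩ B l).indicator (1 : Ω → ℝ) ω)
          = (b : ℝ) * (((a : ℝ) ^ 2 - a) / 2) := by
        have hC : ∑ k1 : Fin n, ∑ k2 ∈ Finset.univ.filter (fun k2 => k1 < k2),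
            u k1 * u k2 = ((a : ℝ) ^ 2 - a) / 2 := by rw [pairsum, hsu, hsu2]
        simp_rw [e3]
        calc ∑ l : Fin m, ∑ k1 : Fin n, ∑ k2 ∈ Finset.univ.filter (fun k2 => k1 < k2),
              v l * (u k1 * u k2)
            = ∑ l : Fin m, v l * (((a : ℝ) ^ 2 - a) / 2) := by
              refine Finset.sum_congr rfl fun l _ => ?_
              rw [← hC, Finset.mul_sum]
              exact Finset.sum_congr rfl fun k1 _ => by rw [Finset.mul_sum]
          _ = (b : ℝ) * (((a : ℝ) ^ 2 - a) / 2) := by rw [← Finset.sum_mul, hsv]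
      have EU : (⋃ k, ⋃ l, A k ∩ B l).indicator (1 : Ω → ℝ) ω
          = if 1 ≤ a ∧ 1 ≤ b then 1 else 0 := by
        rw [Set.indicator_apply]
        congr 1
        simp only [Set.mem_iUnion, Set.mem_inter_iff, eq_iff_iff]
        rw [ha, hb]
        simp only [Nat.one_le_iff_ne_zero, ← Nat.pos_iff_ne_zero, Finset.card_pos,
          Finset.filter_nonempty_iff, Finset.mem_univ, true_and]
        constructor
        · rintro ⟨k, l, h1, h2⟩; exact ⟨⟨k, h1⟩, ⟨l, h2⟩⟩
        · rintro ⟨⟨k, h1⟩, ⟨l, h2⟩⟩; exact ⟨k, l, h1, h2⟩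
      rw [E1, E2, E3, EU]
      exact keyineq a b
    have hmono : ∫ ω, ((∑ k : Fin n, ∑ l : Fin m, (A k ∩ B l).indicator (1 : Ω → ℝ) ω)
        - (∑ k : Fin n, ∑ l1 : Fin m, ∑ l2 ∈ Finset.univ.filter (fun l2 => l1 < l2),
            (A k ∩ B l1 ∩ B l2).indicator (1 : Ω → ℝ) ω)
        - (∑ l : Fin m, ∑ k1 : Fin n, ∑ k2 ∈ Finset.univ.filter (fun k2 => k1 < k2),
            (A k1 ∩ A k2 ∩ B l).indicator (1 : Ω → ℝ) ω)) ∂P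
        ≤ ∫ ω, (⋃ k, ⋃ l, A k ∩ B l).indicator (1 : Ω → ℝ) ω ∂P :=
      integral_mono ((hf1.sub hf2).sub hf3) (hind _ hUm) hpt
    have hf12 : Integrable (fun ω => (∑ k : Fin n, ∑ l : Fin m,
        (A k ∩ B l).indicator (1 : Ω → ℝ) ω)
        - (∑ k : Fin n, ∑ l1 : Fin m, ∑ l2 ∈ Finset.univ.filter (fun l2 => l1 < l2),
            (A k ∩ B l1 ∩ B l2).indicator (1 : Ω → ℝ) ω)) P := hf1.sub hf2
    rw [integral_sub hf12 hf3, integral_sub hf1 hf2,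
      integral_indicator_one hUm] at hmono
    have I1 : ∫ ω, (∑ k : Fin n, ∑ l : Fin m, (A k ∩ B l).indicator (1 : Ω → ℝ) ω) ∂P
        = ∑ k : Fin n, ∑ l : Fin m, (P (A k ∩ B l)).toReal := by
      rw [integral_finset_sum _ fun k _ => integrable_finset_sum _ fun l _ =>
        hind _ ((hA k).inter (hB l))]
      exact Finset.sum_congr rfl fun k _ => by
        rw [integral_finset_sum _ fun l _ => hind _ ((hA k).inter (hB l))]
        exact Finset.sum_congr rfl fun l _ =>
          integral_indicator_one ((hA k).inter (hB l))
    have I2 : ∫ ω, (∑ k : Fin n, ∑ l1 : Fin m,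
          ∑ l2 ∈ Finset.univ.filter (fun l2 => l1 < l2),
          (A k ∩ B l1 ∩ B l2).indicator (1 : Ω → ℝ) ω) ∂P
        = ∑ k : Fin n, ∑ l1 : Fin m, ∑ l2 ∈ Finset.univ.filter (fun l2 => l1 < l2),
          (P (A k ∩ B l1 ∩ B l2)).toReal := by
      rw [integral_finset_sum _ fun k _ => integrable_finset_sum _ fun l1 _ =>
        integrable_finset_sum _ fun l2 _ => hind _ (((hA k).inter (hB l1)).inter (hB l2))]
      refine Finset.sum_congr rfl fun k _ => ?_
      rw [integral_finset_sum _ fun l1 _ => integrable_finset_sum _ fun l2 _ =>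
        hind _ (((hA k).inter (hB l1)).inter (hB l2))]
      refine Finset.sum_congr rfl fun l1 _ => ?_
      rw [integral_finset_sum _ fun l2 _ => hind _ (((hA k).inter (hB l1)).inter (hB l2))]
      exact Finset.sum_congr rfl fun l2 _ =>
        integral_indicator_one (((hA k).inter (hB l1)).inter (hB l2))
    have I3 : ∫ ω, (∑ l : Fin m, ∑ k1 : Fin n,
          ∑ k2 ∈ Finset.univ.filter (fun k2 => k1 < k2),
          (A k1 ∩ A k2 ∩ B l).indicator (1 : Ω → ℝ) ω) ∂P
        = ∑ l : Fin m, ∑ k1 : Fin n, ∑ k2 ∈ Finset.univ.filter (fun k2 => k1 < k2),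
          (P (A k1 ∩ A k2 ∩ B l)).toReal := by
      rw [integral_finset_sum _ fun l _ => integrable_finset_sum _ fun k1 _ =>
        integrable_finset_sum _ fun k2 _ => hind _ (((hA k1).inter (hA k2)).inter (hB l))]
      refine Finset.sum_congr rfl fun l _ => ?_
      rw [integral_finset_sum _ fun k1 _ => integrable_finset_sum _ fun k2 _ =>
        hind _ (((hA k1).inter (hA k2)).inter (hB l))]
      refine Finset.sum_congr rfl fun k1 _ => ?_
      rw [integral_finset_sum _ fun k2 _ => hind _ (((hA k1).inter (hA k2)).inter (hB l))]
      exact Finset.sum_congr rfl fun k2 _ =>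
        integral_indicator_one (((hA k1).inter (hA k2)).inter (hB l))
    rw [I1, I2, I3] at hmono
    exact hmono
end
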